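/- Let r₀, ..., r_{T-1} be real numbers and define the prefix sums S_k = ∑_{i=0}^{k} r_i for k ≥ 0 and S_{-1} = 0. Define h_t via h₀ = 0, h_{t+1} = max(0, h_t − r_t). Then max(0, r_t − h_t) = max_{k ≤ t} S_k − max_{k ≤ t−1} S_k where the maxima include k = −1, i.e., the adapted reward for the maximum-prefix-sum objective equals the increment of the running maximum of prefix sums. -/

import Mathlib

/-! With `S t = ∑_{i<t} r i` and `M t = max_{n ≤ t} S n` (empty prefix included), one has
`h t = M t - S t` by induction, because `M (t + 1) = max (M t) (S (t + 1))` and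
`max 0 (M t - S (t + 1)) = max (M t) (S (t + 1)) - S (t + 1)`. Substituting this invariant,
`max 0 (r t - h t) = max (M t) (S (t + 1)) - M t = M (t + 1) - M t`. -/

open Finset

section AddCommMonoid

variable {α : Type*} [AddCommMonoid α] [LinearOrder α]

def runningMaxPrefixSum (r : ℕ → α) (t : ℕ) : α :=
  (range (t + 1)).sup' nonempty_range_add_one fun n => ∑ i ∈ range n, r i

theorem runningMaxPrefixSum_zero (r : ℕ → α) : runningMaxPrefixSum r 0 = 0 := by
  simp [runningMaxPrefixSum]

theorem runningMaxPrefixSum_succ (r : ℕ → α) (t : ℕ) :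
    runningMaxPrefixSum r (t + 1) = max (runningMaxPrefixSum r t) (∑ i ∈ range (t + 1), r i) := by
  rw [runningMaxPrefixSum, sup'_congr _ range_add_one (fun _ _ => rfl), sup'_insert, sup_comm]
  rfl

end AddCommMonoid

theorem eq_runningMaxPrefixSum_sub_sum {α : Type*} [AddCommGroup α] [LinearOrder α]
    [IsOrderedAddMonoid α] {r h : ℕ → α} (h0 : h 0 = 0)
    (hrec : ∀ t, h (t + 1) = max 0 (h t - r t)) (t : ℕ) :
    h t = runningMaxPrefixSum r t - ∑ i ∈ range t, r i := by
  induction t with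
  | zero => simp [h0, runningMaxPrefixSum_zero]
  | succ t ih =>
    rw [hrec, ih, runningMaxPrefixSum_succ, sum_range_succ, max_comm, ← max_sub_sub_right, sub_self,
      sub_sub]

/-- Stepwise version of the maximum-prefix-sum identity: with `h₀ = 0`,
`h_{t+1} = max 0 (h_t − r_t)`, the adapted reward `max 0 (r_t − h_t)` equals
the increment of the running maximum of prefix sums (maxima including the
empty prefix `S₋₁ = 0`; a prefix of length `n` corresponds to `k = n − 1`). -/
theorem adapted_reward_eq_running_max_increment (r h : ℕ → ℝ) (h0 : h 0 = 0)
    (hrec : ∀ t, h (t + 1) = max 0 (h t - r t)) :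
    ∀ t, max 0 (r t - h t) =
      (Finset.range (t + 2)).sup' (Finset.nonempty_range_iff.mpr (by omega))
        (fun n => ∑ i ∈ Finset.range n, r i)
      - (Finset.range (t + 1)).sup' (Finset.nonempty_range_iff.mpr (by omega))
          (fun n => ∑ i ∈ Finset.range n, r i) := by
  intro t
  change _ = runningMaxPrefixSum r (t + 1) - runningMaxPrefixSum r t
  rw [eq_runningMaxPrefixSum_sub_sum h0 hrec, runningMaxPrefixSum_succ, sum_range_succ,
    ← max_sub_sub_right, sub_self, sub_sub_eq_add_sub, add_comm (r t)]
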